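/- Combining partial decompression with the factor length bound: for a string S of length N represented by an SLP with variables X_1,...,X_n, every LZ78 factor of S is a substring of some string in T_S = { t_i : |val(X_i)| ≥ c_N }, where c_N = √(2N + 1/4) − 1/2, t_i = suf(val(X_{ℓ(i)}), ⌈c_N⌉−1)·pre(val(X_{r(i)}), ⌈c_N⌉−1), and the total length of the strings in T_S is at most 2n(⌈c_N⌉−1) = O(n√N). -/

import Mathlib

/-!
An LZ78 factor of length `ℓ > 1` extends an earlier factor by one character, so factors of every
length `1, …, ℓ` occur; as they are disjoint pieces of `S`, `ℓ(ℓ+1)/2 ≤ N = |S|`, i.e.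
`ℓ ≤ c_N ≤ q = ⌈c_N⌉`. An occurrence of a string of length at most `q` in `val(X_i)` either lies
inside a child of length at least `q`, where we descend, or within `q - 1` characters of the
boundary between the two children, i.e. inside `t_i`.
-/

/-- A straight line program (SLP): variables are indexed `0, 1, 2, …` (variable `i`
corresponds to `X_{i+1}` in 1-based notation); each rule is either a terminal character
or a concatenation of two variables with strictly smaller indices. The SLP has `n`
variables `0, …, n-1` and represents `val (n-1)`. -/
structure SLP (α : Type*) where
  n : ℕ
  rule : ℕ → α ⊕ (ℕ × ℕ)
  valid : ∀ i l r, rule i = Sum.inr (l, r) → l < i ∧ r < i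

/-- The string derived from variable `i` of the SLP. -/
def SLP.val {α : Type*} (P : SLP α) (i : ℕ) : List α :=
  match h : P.rule i with
  | Sum.inl a => [a]
  | Sum.inr (l, r) =>
    have _hv := P.valid i l r h
    P.val l ++ P.val r
termination_by i
decreasing_by
  · exact _hv.1
  · exact _hv.2

/-- The LZ78 dictionary available when computing the `i`-th factor:
singleton characters, together with any earlier factor extended by one character. -/
def LZDict {α : Type*} (fs : List (List α)) (i : ℕ) (g : List α) : Prop :=
  (∃ c : α, g = [c]) ∨ ∃ f ∈ fs.take i, ∃ c : α, g = f ++ [c]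

/-- `fs` is the LZ78 factorization of `S`: the factors concatenate to `S`, each factor
is in the dictionary of earlier factors, and each factor is the longest prefix of the
remaining suffix that lies in the dictionary. -/
def IsLZ78 {α : Type*} (S : List α) (fs : List (List α)) : Prop :=
  S = fs.flatten ∧
  ∀ i < fs.length,
    LZDict fs i (fs.getD i []) ∧
    ∀ g : List α, LZDict fs i g → g <+: (fs.drop i).flatten →
      g.length ≤ (fs.getD i []).length

/-- The string `t_i` built from windows of width `q−1` around the boundary of rule `i`. -/
def SLP.tstr {α : Type*} (P : SLP α) (q : ℕ) (i : ℕ) : List α :=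
  match P.rule i with
  | Sum.inl _ => []
  | Sum.inr (l, r) =>
    (P.val l).drop ((P.val l).length - (q - 1)) ++ (P.val r).take (q - 1)

namespace List

variable {α : Type*}

theorem sum_toFinset_le_sum {M : Type*} [AddCommMonoid M] [PartialOrder M]
    [IsOrderedAddMonoid M] [CanonicallyOrderedAdd M] [DecidableEq M] (l : List M) :
    ∑ x ∈ l.toFinset, x ≤ l.sum := by
  rw [Finset.sum_list_count]
  refine Finset.sum_le_sum fun x hx => le_self_nsmul zero_le ?_
  exact (count_pos_iff.mpr (mem_toFinset.mp hx)).ne'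

theorem infix_append_cases {w A B : List α} {k : ℕ} (h : w <:+: A ++ B)
    (hw : w.length ≤ k + 1) :
    w <:+: A ∨ w <:+: B ∨ w <:+: A.drop (A.length - k) ++ B.take k := by
  obtain ⟨s, t, hst⟩ := h
  rw [append_assoc, append_eq_append_iff] at hst
  rcases hst with ⟨a, rfl, hwt⟩ | ⟨b, rfl, rfl⟩
  · rw [append_eq_append_iff] at hwt
    rcases hwt with ⟨c, rfl, rfl⟩ | ⟨c, rfl, rfl⟩
    · exact .inl ⟨s, c, by simp⟩
    obtain rfl | hc := eq_or_ne c []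
    · exact .inl ⟨s, [], by simp⟩
    obtain rfl | ha := eq_or_ne a []
    · exact .inr (.inl ⟨[], t, by simp⟩)
    have hak : a.length ≤ k := by
      have := length_pos_iff.mpr hc; simp only [length_append] at hw; omega
    have hck : c.length ≤ k := by
      have := length_pos_iff.mpr ha; simp only [length_append] at hw; omega
    obtain ⟨u, hu⟩ : a <:+ (s ++ a).drop ((s ++ a).length - k) :=
      suffix_of_suffix_length_le (suffix_append s a) (drop_suffix _ _) (by simp; omega)
    obtain ⟨v, hv⟩ : c <+: (c ++ t).take k :=
      prefix_of_prefix_length_le (prefix_append c t) (take_prefix _ _) (by simp; omega)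
    exact .inr (.inr ⟨u, v, by rw [← hu, ← hv]; simp⟩)
  · exact .inr (.inl ⟨b, t, by simp⟩)

theorem infix_append_long_or_window {w A B : List α} {k : ℕ} (h : w <:+: A ++ B)
    (hw : w.length ≤ k + 1) :
    (w <:+: A ∧ k < A.length) ∨ (w <:+: B ∧ k < B.length) ∨
      w <:+: A.drop (A.length - k) ++ B.take k := by
  rcases infix_append_cases h hw with hA | hB | hwin
  · by_cases hkA : k < A.length
    · exact .inl ⟨hA, hkA⟩
    rw [Nat.sub_eq_zero_of_le (by omega), drop_zero]
    exact .inr (.inr (hA.trans (prefix_append A _).isInfix))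
  · by_cases hkB : k < B.length
    · exact .inr (.inl ⟨hB, hkB⟩)
    rw [take_of_length_le (by omega)]
    exact .inr (.inr (hB.trans (suffix_append _ B).isInfix))
  · exact .inr (.inr hwin)

end List

namespace SLP

variable {α : Type*} (P : SLP α)

theorem val_of_rule_inl {i : ℕ} {a : α} (h : P.rule i = .inl a) : P.val i = [a] := by
  rw [SLP.val]; split <;> simp_all

theorem val_of_rule_inr {i l r : ℕ} (h : P.rule i = .inr (l, r)) :
    P.val i = P.val l ++ P.val r := by
  rw [SLP.val]; split <;> simp_all

theorem tstr_of_rule_inl {q i : ℕ} {a : α} (h : P.rule i = .inl a) : P.tstr q i = [] := by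
  rw [SLP.tstr, h]

theorem tstr_of_rule_inr {q i l r : ℕ} (h : P.rule i = .inr (l, r)) :
    P.tstr q i = (P.val l).drop ((P.val l).length - (q - 1)) ++ (P.val r).take (q - 1) := by
  rw [SLP.tstr, h]

theorem length_tstr_le (q i : ℕ) : (P.tstr q i).length ≤ 2 * (q - 1) := by
  rcases h : P.rule i with a | ⟨l, r⟩
  · simp [P.tstr_of_rule_inl h]
  · rw [P.tstr_of_rule_inr h, List.length_append, List.length_drop, List.length_take]
    omega

theorem sum_length_tstr_le (q : ℕ) (p : ℕ → Prop) [DecidablePred p] :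
    ∑ i ∈ (Finset.range P.n).filter p, (P.tstr q i).length ≤ 2 * P.n * (q - 1) :=
  calc ∑ i ∈ (Finset.range P.n).filter p, (P.tstr q i).length
      ≤ ((Finset.range P.n).filter p).card • (2 * (q - 1)) :=
        Finset.sum_le_card_nsmul _ _ _ fun i _ => P.length_tstr_le q i
    _ ≤ P.n * (2 * (q - 1)) := by
        rw [smul_eq_mul]
        gcongr
        exact (Finset.card_filter_le _ _).trans (Finset.card_range _).le
    _ = 2 * P.n * (q - 1) := by ring

theorem exists_infix_tstr {q : ℕ} (hq : 2 ≤ q) {w : List α} (hw : w.length ≤ q) (i : ℕ)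
    (hwi : w <:+: P.val i) (hqi : q ≤ (P.val i).length) :
    ∃ j ≤ i, ∃ l r, P.rule j = .inr (l, r) ∧ q ≤ (P.val j).length ∧ w <:+: P.tstr q j := by
  induction i using Nat.strong_induction_on with
  | _ i ih =>
  rcases hrule : P.rule i with a | ⟨l, r⟩
  · simp [P.val_of_rule_inl hrule] at hqi
    omega
  obtain ⟨hl, hr⟩ := P.valid i l r hrule
  rw [P.val_of_rule_inr hrule] at hwi
  rcases List.infix_append_long_or_window (k := q - 1) hwi (by omega) with
    ⟨hwl, hql⟩ | ⟨hwr, hqr⟩ | hwin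
  · obtain ⟨j, hj, rest⟩ := ih l hl hwl (by omega)
    exact ⟨j, hj.trans hl.le, rest⟩
  · obtain ⟨j, hj, rest⟩ := ih r hr hwr (by omega)
    exact ⟨j, hj.trans hr.le, rest⟩
  · exact ⟨i, le_rfl, l, r, hrule, hqi, P.tstr_of_rule_inr hrule ▸ hwin⟩

end SLP

namespace IsLZ78

variable {α : Type*} {S : List α} {fs : List (List α)}

theorem eq_singleton_or_eq_append_singleton (h : IsLZ78 S fs) {f : List α} (hf : f ∈ fs) :
    (∃ c, f = [c]) ∨ ∃ g ∈ fs, ∃ c, f = g ++ [c] := by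
  obtain ⟨i, hi, rfl⟩ := List.getElem_of_mem hf
  have hdict := (h.2 i hi).1
  rw [List.getD_eq_getElem _ _ hi] at hdict
  rcases hdict with hc | ⟨g, hg, hgc⟩
  · exact .inl hc
  · exact .inr ⟨g, List.mem_of_mem_take hg, hgc⟩

theorem exists_mem_length_eq (h : IsLZ78 S fs) {s : ℕ} (hs : 1 ≤ s) {f : List α}
    (hf : f ∈ fs) (hsf : s ≤ f.length) : ∃ g ∈ fs, g.length = s := by
  induction hn : f.length generalizing f with
  | zero => omega
  | succ n ih =>
    rcases hsf.eq_or_lt with hsf | hsf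
    · exact ⟨f, hf, by omega⟩
    rcases h.eq_singleton_or_eq_append_singleton hf with ⟨c, rfl⟩ | ⟨g, hg, c, rfl⟩
    · simp only [List.length_singleton] at hn hsf
      omega
    · simp only [List.length_append, List.length_singleton] at hn hsf
      exact ih hg (by omega) (by omega)

theorem length_mul_succ_le (h : IsLZ78 S fs) {f : List α} (hf : f ∈ fs) :
    f.length * (f.length + 1) ≤ 2 * S.length := by
  classical
  have hsum : ∑ s ∈ Finset.range (f.length + 1), s ≤ S.length :=
    calc ∑ s ∈ Finset.range (f.length + 1), s
        ≤ ∑ s ∈ (fs.map List.length).toFinset, s := by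
          refine Finset.sum_le_sum_of_ne_zero fun s hs hs0 => ?_
          obtain ⟨g, hg, rfl⟩ :=
            h.exists_mem_length_eq (Nat.one_le_iff_ne_zero.mpr hs0) hf
              (Nat.lt_succ_iff.mp (Finset.mem_range.mp hs))
          exact List.mem_toFinset.mpr (List.mem_map_of_mem hg)
      _ ≤ (fs.map List.length).sum := List.sum_toFinset_le_sum _
      _ = S.length := by rw [← List.length_flatten, ← h.1]
  have := Finset.sum_range_id_mul_two (f.length + 1)
  simp only [Nat.add_sub_cancel] at this
  rw [Nat.mul_comm (f.length + 1)] at this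
  omega

end IsLZ78

section SqrtBound

variable {x N : ℝ}

theorem le_sqrt_two_mul_add_quarter_sub_half_iff (hx : 0 ≤ x) :
    x ≤ √(2 * N + 1 / 4) - 1 / 2 ↔ x * (x + 1) ≤ 2 * N := by
  rw [le_sub_iff_add_le, Real.le_sqrt' (by positivity)]
  constructor <;> intro h <;> nlinarith

theorem lt_sqrt_two_mul_add_quarter_sub_half_iff (hx : 0 ≤ x) :
    x < √(2 * N + 1 / 4) - 1 / 2 ↔ x * (x + 1) < 2 * N := by
  rw [lt_sub_iff_add_lt, Real.lt_sqrt (by positivity)]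
  constructor <;> intro h <;> nlinarith

end SqrtBound

/-- with `c_N = √(2N+1/4) − 1/2` and `q = ⌈c_N⌉`, every LZ78 factor of
the string `S` represented by the SLP is a substring of some `t_i` with
`|val(X_i)| ≥ c_N`, and the total length of these strings is at most `2n(q−1)`. -/
theorem lz78_factors_in_partial_decompression {α : Type*} (P : SLP α) (hn : 1 ≤ P.n)
    (S : List α) (hS : S = P.val (P.n - 1)) (hlen : 3 ≤ S.length)
    (fs : List (List α)) (h : IsLZ78 S fs) :
    letI cN : ℝ := Real.sqrt (2 * S.length + 1 / 4) - 1 / 2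
    letI q : ℕ := ⌈cN⌉₊
    (∀ f ∈ fs, ∃ i < P.n, ∃ l r, P.rule i = Sum.inr (l, r) ∧
        cN ≤ ((P.val i).length : ℝ) ∧ f <:+: P.tstr q i) ∧
    (∑ i ∈ (Finset.range P.n).filter (fun i => cN ≤ ((P.val i).length : ℝ)),
        (P.tstr q i).length) ≤ 2 * P.n * (q - 1) := by
  set cN : ℝ := √(2 * S.length + 1 / 4) - 1 / 2
  set q : ℕ := ⌈cN⌉₊
  refine ⟨fun f hf => ?_, P.sum_length_tstr_le q _⟩
  have hN : (3 : ℝ) ≤ S.length := by exact_mod_cast hlen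
  have hq : 2 ≤ q := Nat.lt_ceil.mpr <| by
    exact_mod_cast (lt_sqrt_two_mul_add_quarter_sub_half_iff zero_le_one).mpr (by linarith)
  have hqS : q ≤ S.length := Nat.ceil_le.mpr <| not_lt.mp fun hlt => by
    have := (lt_sqrt_two_mul_add_quarter_sub_half_iff (Nat.cast_nonneg _)).mp hlt
    nlinarith
  have hfq : f.length ≤ q := Nat.cast_le.mp <| le_trans
    ((le_sqrt_two_mul_add_quarter_sub_half_iff (Nat.cast_nonneg _)).mpr
      (by exact_mod_cast h.length_mul_succ_le hf)) (Nat.le_ceil cN)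
  have hfS : f <:+: P.val (P.n - 1) := hS ▸ h.1 ▸ List.infix_of_mem_flatten hf
  obtain ⟨j, hj, l, r, hrule, hqj, hfj⟩ :=
    P.exists_infix_tstr hq hfq (P.n - 1) hfS (hS ▸ hqS)
  exact ⟨j, by omega, l, r, hrule, Nat.ceil_le.mp hqj, hfj⟩
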